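/- As k → 0 in ℝ³, the difference W^{(+)}(k) − exp(−(i/√3)(k₁·σx − k₂·σy + k₃·σz)) is O(‖k‖²), i.e. the matrix-valued function k ↦ W^{(+)}(k) − exp(−i·H⁺_W(k)) with H⁺_W(k) := (k₁σx − k₂σy + k₃σz)/√3 is big-O of ‖k‖² in a neighbourhood of k = 0. Hence in the small-momentum limit the Weyl cellular automaton recovers the right-handed Weyl equation. -/

import Mathlib

noncomputable section
open Matrix Asymptotics Filter

attribute [local instance] Matrix.normedAddCommGroup Matrix.normedSpace

/-- Pauli matrix σx. -/
def σx : Matrix (Fin 2) (Fin 2) ℂ := !![0, 1; 1, 0]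
/-- Pauli matrix σy. -/
def σy : Matrix (Fin 2) (Fin 2) ℂ := !![0, -Complex.I; Complex.I, 0]
/-- Pauli matrix σz. -/
def σz : Matrix (Fin 2) (Fin 2) ℂ := !![1, 0; 0, -1]

/-- The one-particle walk matrix `W^{(+)}(k)` of the (right-handed) Weyl cellular automaton. -/
def Wplus (k : EuclideanSpace ℝ (Fin 3)) : Matrix (Fin 2) (Fin 2) ℂ :=
  let c : Fin 3 → ℝ := fun j => Real.cos (k j / Real.sqrt 3)
  let sn : Fin 3 → ℝ := fun j => Real.sin (k j / Real.sqrt 3)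
  ((c 0 * c 1 * c 2 - sn 0 * sn 1 * sn 2 : ℝ) : ℂ) • (1 : Matrix (Fin 2) (Fin 2) ℂ)
    - (Complex.I * ((sn 0 * c 1 * c 2 + c 0 * sn 1 * sn 2 : ℝ) : ℂ)) • σx
    + (Complex.I * ((c 0 * sn 1 * c 2 - sn 0 * c 1 * sn 2 : ℝ) : ℂ)) • σy
    - (Complex.I * ((c 0 * c 1 * sn 2 + sn 0 * sn 1 * c 2 : ℝ) : ℂ)) • σz

/-- The Hamiltonian of the right-handed Weyl equation, `H⁺_W(k) = (k₁σx − k₂σy + k₃σz)/√3`. -/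
def HW (k : EuclideanSpace ℝ (Fin 3)) : Matrix (Fin 2) (Fin 2) ℂ :=
  ((Real.sqrt 3 : ℂ))⁻¹ • ((k 0 : ℂ) • σx - (k 1 : ℂ) • σy + (k 2 : ℂ) • σz)

/-!
Write `A k := -i H⁺_W(k)` and split `W⁺(k) - exp (A k)` as
`(W⁺(k) - 1 - A k) - (exp (A k) - 1 - A k)`.
Both `W⁺(k)` and `1 + A k` are real combinations of `1, iσx, iσy, iσz`; the coefficients of
`W⁺(k)` are products of sines and cosines of `kⱼ/√3`, which agree with `1` and `kⱼ/√3` up to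
`O(‖k‖²)`. The second term is `O(‖A k‖²) = O(‖k‖²)` by the power series of `exp`.
-/

open Topology

namespace NormedSpace

theorem exp_sub_one_sub_isBigO {𝕂 𝔸 : Type*} [RCLike 𝕂] [NormedRing 𝔸] [NormedAlgebra 𝕂 𝔸]
    [CompleteSpace 𝔸] :
    (fun x : 𝔸 => exp x - 1 - x) =O[𝓝 0] fun x => ‖x‖ ^ 2 := by
  refine ((exp_hasFPowerSeriesAt_zero (𝕂 := 𝕂)).isBigO_sub_partialSum_pow 2).congr_left
    fun x => ?_
  simp [FormalMultilinearSeries.partialSum, Finset.sum_range_succ, expSeries_apply_eq]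
  abel

end NormedSpace

namespace Matrix

open NormedSpace

/- The entrywise norm is not submultiplicative, so the power series estimate is made in the
operator algebra `EuclideanSpace 𝕜 n →L[𝕜] EuclideanSpace 𝕜 n` and pulled back along the linear
homeomorphism `toEuclideanCLM`. -/
theorem exp_sub_one_sub_isBigO {n 𝕜 : Type*} [Fintype n] [DecidableEq n] [RCLike 𝕜] :
    (fun M : Matrix n n 𝕜 => exp M - 1 - M) =O[𝓝 0] fun M => ‖M‖ ^ 2 := by
  let φ := toEuclideanCLM (n := n) (𝕜 := 𝕜)
  let e := φ.toAlgEquiv.toLinearEquiv.toContinuousLinearEquiv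
  have hexp : ∀ M, exp M = φ.symm (exp (φ M)) := fun M => by
    have := (exp_series_hasSum_exp' (𝕂 := 𝕜) (φ M)).map φ.symm e.symm.continuous
    rw [exp_eq_tsum 𝕜]
    exact HasSum.tsum_eq (by simpa [Function.comp_def, map_pow] using this)
  calc (fun M => exp M - 1 - M) = fun M => e.symm (exp (e M) - 1 - e M) := by
        ext1 M; rw [hexp M]; simp [e]
    _ =O[𝓝 0] fun M => exp (e M) - 1 - e M := e.symm.isBigO_comp _ _
    _ =O[𝓝 0] fun M => ‖e M‖ ^ 2 :=
        (NormedSpace.exp_sub_one_sub_isBigO (𝕂 := 𝕜)).comp_tendsto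
          (e.continuous.tendsto' 0 0 (map_zero e))
    _ =O[𝓝 0] fun M => ‖M‖ ^ 2 := (e.isBigO_comp _ _).norm_norm.pow 2

end Matrix

theorem DifferentiableAt.isBigO_norm_of_eq_zero {𝕜 E F : Type*} [NontriviallyNormedField 𝕜]
    [NormedAddCommGroup E] [NormedSpace 𝕜 E] [NormedAddCommGroup F] [NormedSpace 𝕜 F]
    {f : E → F} (hf : DifferentiableAt 𝕜 f 0) (h0 : f 0 = 0) : f =O[𝓝 0] fun x => ‖x‖ := by
  simpa [h0] using hf.isBigO_sub.norm_right

section Trigonometric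

open Real

lemma Real.abs_cos_sub_one_le (x : ℝ) : |cos x - 1| ≤ x ^ 2 / 2 := by
  rw [abs_of_nonpos (by linarith [cos_le_one x])]
  linarith [one_sub_sq_div_two_le_cos (x := x)]

lemma Real.abs_sin_sub_self_le (x : ℝ) : |sin x - x| ≤ 2 * x ^ 2 := by
  rw [abs_sub_comm]
  rcases le_total |x| 1 with hx | hx
  · have : |x| ^ 3 ≤ x ^ 2 := by
      rw [← sq_abs x, pow_succ]; exact mul_le_of_le_one_right (by positivity) hx
    linarith [abs_sub_sin_le x, sq_nonneg x]
  · calc |x - sin x| ≤ |x| + |sin x| := abs_sub _ _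
      _ ≤ 2 * |x| := by linarith [abs_sin_le_one x]
      _ ≤ 2 * x ^ 2 := by rw [← sq_abs x]; nlinarith

namespace Asymptotics

variable {α : Type*} {l : Filter α} {g x y z w : α → ℝ}

lemma IsBigO.mul_of_abs_le_one {f : α → ℝ} (hf : f =O[l] g) (hw : ∀ t, |w t| ≤ 1) :
    (fun t => f t * w t) =O[l] g :=
  (isBigO_of_le l fun t => by
    simpa [abs_mul] using mul_le_of_le_one_right (abs_nonneg (f t)) (hw t)).trans hf

lemma isBigO_sin_comp (hx : x =O[l] g) : (fun t => sin (x t)) =O[l] g :=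
  (isBigO_of_le l fun t => by simpa using abs_sin_le_abs).trans hx

lemma isBigO_cos_comp_sub_one (hx : x =O[l] g) :
    (fun t => cos (x t) - 1) =O[l] fun t => g t ^ 2 :=
  (isBigO_of_le' (c := 1 / 2) l fun t => by
    simpa [div_eq_inv_mul] using (abs_cos_sub_one_le (x t)).trans_eq (by ring)).trans (hx.pow 2)

lemma isBigO_sin_comp_sub_self (hx : x =O[l] g) :
    (fun t => sin (x t) - x t) =O[l] fun t => g t ^ 2 :=
  (isBigO_of_le' (c := 2) l fun t => by simpa using abs_sin_sub_self_le (x t)).trans (hx.pow 2)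

lemma isBigO_sin_mul_sin_mul (hx : x =O[l] g) (hy : y =O[l] g) (hw : ∀ t, |w t| ≤ 1) :
    (fun t => sin (x t) * sin (y t) * w t) =O[l] fun t => g t ^ 2 :=
  (((isBigO_sin_comp hx).mul (isBigO_sin_comp hy)).mul_of_abs_le_one hw).congr_right
    fun t => by ring

lemma isBigO_cos_mul_cos_mul_cos_sub_one (hx : x =O[l] g) (hy : y =O[l] g) (hz : z =O[l] g) :
    (fun t => cos (x t) * cos (y t) * cos (z t) - 1) =O[l] fun t => g t ^ 2 := by
  have hyz : ∀ t, |cos (y t) * cos (z t)| ≤ 1 := fun t => by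
    rw [abs_mul]; exact mul_le_one₀ (abs_cos_le_one _) (abs_nonneg _) (abs_cos_le_one _)
  refine ((((isBigO_cos_comp_sub_one hx).mul_of_abs_le_one hyz).add
    ((isBigO_cos_comp_sub_one hy).mul_of_abs_le_one fun t => abs_cos_le_one (z t))).add
    (isBigO_cos_comp_sub_one hz)).congr_left fun t => ?_
  ring

lemma isBigO_sin_mul_cos_mul_cos_sub_self (hx : x =O[l] g) (hy : y =O[l] g) (hz : z =O[l] g) :
    (fun t => sin (x t) * cos (y t) * cos (z t) - x t) =O[l] fun t => g t ^ 2 := by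
  have hxz : ∀ t, |sin (x t) * cos (z t)| ≤ 1 := fun t => by
    rw [abs_mul]; exact mul_le_one₀ (abs_sin_le_one _) (abs_nonneg _) (abs_cos_le_one _)
  refine (((isBigO_sin_comp_sub_self hx).add
    ((isBigO_cos_comp_sub_one hy).mul_of_abs_le_one hxz)).add
    ((isBigO_cos_comp_sub_one hz).mul_of_abs_le_one fun t => abs_sin_le_one (x t))).congr_left
    fun t => ?_
  ring

end Asymptotics

end Trigonometric

def pauliComb (d a b c : ℝ) : Matrix (Fin 2) (Fin 2) ℂ :=
  (d : ℂ) • 1 - (Complex.I * a) • σx + (Complex.I * b) • σy - (Complex.I * c) • σz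

lemma pauliComb_sub (d a b c d' a' b' c' : ℝ) :
    pauliComb d a b c - pauliComb d' a' b' c' =
      pauliComb (d - d') (a - a') (b - b') (c - c') := by
  simp only [pauliComb]; push_cast; module

lemma pauliComb_one_zero_zero_zero : pauliComb 1 0 0 0 = 1 := by simp [pauliComb]

lemma neg_I_smul_HW (k : EuclideanSpace ℝ (Fin 3)) :
    (-Complex.I) • HW k = pauliComb 0 (k 0 / √3) (k 1 / √3) (k 2 / √3) := by
  simp only [HW, pauliComb]; push_cast; module

section

open Real

lemma Wplus_eq_pauliComb (k : EuclideanSpace ℝ (Fin 3)) : Wplus k = pauliComb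
    (cos (k 0 / √3) * cos (k 1 / √3) * cos (k 2 / √3)
      - sin (k 0 / √3) * sin (k 1 / √3) * sin (k 2 / √3))
    (sin (k 0 / √3) * cos (k 1 / √3) * cos (k 2 / √3)
      + cos (k 0 / √3) * sin (k 1 / √3) * sin (k 2 / √3))
    (cos (k 0 / √3) * sin (k 1 / √3) * cos (k 2 / √3)
      - sin (k 0 / √3) * cos (k 1 / √3) * sin (k 2 / √3))
    (cos (k 0 / √3) * cos (k 1 / √3) * sin (k 2 / √3)
      + sin (k 0 / √3) * sin (k 1 / √3) * cos (k 2 / √3)) :=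
  rfl

lemma isBigO_pauliComb {α : Type*} {l : Filter α} {g d a b c : α → ℝ} (hd : d =O[l] g)
    (ha : a =O[l] g) (hb : b =O[l] g) (hc : c =O[l] g) :
    (fun t => pauliComb (d t) (a t) (b t) (c t)) =O[l] g := by
  have term : ∀ (u : ℂ) (M : Matrix (Fin 2) (Fin 2) ℂ) {f : α → ℝ}, f =O[l] g →
      (fun t => (u * f t) • M) =O[l] g := fun u M f hf =>
    (isBigO_of_le' (c := ‖u‖ * ‖M‖) l fun t => by
      rw [norm_smul, norm_mul, Complex.norm_real, mul_right_comm]).trans hf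
  refine ((((term 1 1 hd).sub (term Complex.I σx ha)).add (term Complex.I σy hb)).sub
    (term Complex.I σz hc)).congr_left fun t => ?_
  simp [pauliComb]

lemma Wplus_sub_one_sub_isBigO :
    (fun k => Wplus k - 1 - (-Complex.I) • HW k) =O[𝓝 0] fun k => ‖k‖ ^ 2 := by
  have hθ (j : Fin 3) : (fun k : EuclideanSpace ℝ (Fin 3) => k j / √3) =O[𝓝 0] fun k => ‖k‖ :=
    DifferentiableAt.isBigO_norm_of_eq_zero (by fun_prop) (by simp)
  have h0 := hθ 0
  have h1 := hθ 1
  have h2 := hθ 2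
  refine (isBigO_pauliComb
    ((isBigO_cos_mul_cos_mul_cos_sub_one h0 h1 h2).sub
      (isBigO_sin_mul_sin_mul h0 h1 fun k => abs_sin_le_one (k 2 / √3)))
    ((isBigO_sin_mul_cos_mul_cos_sub_self h0 h1 h2).add
      (isBigO_sin_mul_sin_mul h1 h2 fun k => abs_cos_le_one (k 0 / √3)))
    ((isBigO_sin_mul_cos_mul_cos_sub_self h1 h0 h2).sub
      (isBigO_sin_mul_sin_mul h0 h2 fun k => abs_cos_le_one (k 1 / √3)))
    ((isBigO_sin_mul_cos_mul_cos_sub_self h2 h0 h1).add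
      (isBigO_sin_mul_sin_mul h0 h1 fun k => abs_cos_le_one (k 2 / √3)))).congr_left fun k => ?_
  rw [Wplus_eq_pauliComb, neg_I_smul_HW, ← pauliComb_one_zero_zero_zero, pauliComb_sub,
    pauliComb_sub]
  congr 1 <;> ring

end

/-- As `k → 0`, the difference `W^{(+)}(k) − exp(−i·H⁺_W(k))` is `O(‖k‖²)`:
in the small-momentum limit the Weyl cellular automaton recovers the right-handed
Weyl equation. -/
theorem weyl_automaton_recovers_weyl_equation :
    (fun k : EuclideanSpace ℝ (Fin 3) =>
        Wplus k - NormedSpace.exp ((-Complex.I) • HW k))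
      =O[nhds (0 : EuclideanSpace ℝ (Fin 3))] (fun k => ‖k‖ ^ 2) := by
  set A := fun k => (-Complex.I) • HW k
  have hA : Differentiable ℝ A := by unfold A HW; fun_prop
  have hA0 : A 0 = 0 := by simp [A, HW]
  have hexp : (fun k => NormedSpace.exp (A k) - 1 - A k) =O[𝓝 0] fun k => ‖k‖ ^ 2 :=
    (Matrix.exp_sub_one_sub_isBigO.comp_tendsto (hA0 ▸ (hA 0).continuousAt.tendsto)).trans
      (((hA 0).isBigO_norm_of_eq_zero hA0).norm_left.pow 2)
  exact (Wplus_sub_one_sub_isBigO.sub hexp).congr_left fun k => by abel
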